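/- Fix an integer h ≥ 2 and a divergent function f: ℕ → ℕ with f(n) = o(n^{h−1}). Then the family of all A ⊆ ℕ satisfying both liminf_{n→∞} r_{A,h}(n) = 0 and limsup_{n→∞} r_{A,h}(n)/f(n) = ∞ is comeager in 𝒫(ℕ). -/

import Mathlib

open Filter Topology Set
open scoped ENNReal

/-- Number of unordered representations of `x` as a sum of `h` elements of `A`
(repetitions allowed): multisets of size `h` with elements in `A` summing to `x`. -/
noncomputable def repCount {X : Type*} [AddCommMonoid X] (A : Set X) (h : ℕ) (x : X) : ℕ :=
  Nat.card {s : Multiset X // Multiset.card s = h ∧ (∀ a ∈ s, a ∈ A) ∧ s.sum = x}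

/-- `A` is a `B_h[g]` set: every `x` has at most `g` unordered representations. -/
def IsBhg {X : Type*} [AddCommMonoid X] (A : Set X) (h g : ℕ) : Prop :=
  ∀ x, repCount A h x ≤ g

/-- `A ⊆ ℕ` is a Sidon set. -/
def IsSidonSet (A : Set ℕ) : Prop :=
  ∀ a b c d, a ∈ A → b ∈ A → c ∈ A → d ∈ A → a ≤ b → c ≤ d → a + b = c + d → a = c ∧ b = d

/-- Lower asymptotic density. -/
noncomputable def lowerDensity (S : Set ℕ) : ℝ :=
  Filter.liminf (fun n => ((S ∩ Set.Ico 0 n).ncard : ℝ) / n) Filter.atTop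

/-- Upper asymptotic density. -/
noncomputable def upperDensity (S : Set ℕ) : ℝ :=
  Filter.limsup (fun n => ((S ∩ Set.Ico 0 n).ncard : ℝ) / n) Filter.atTop

/-! Both conditions say that some property of the finite set `A ∩ [0, n]` holds for infinitely
many `n`. Such a set is a countable intersection of open sets, and each of them is dense as soon
as every finite prefix `A ∩ [0, j)` can be extended to a set with the property at arbitrarily
large `n`. Extending by the empty set gives `r_{A,h}(n) = 0` for all large `n`. Extending by
the whole of `[j, ∞)` gives `r_{A,h}(n) ≥ D^{h-1}` at `n = h (j + (h-1) D)`, since each of the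
first `h - 1` summands can be chosen freely in its own block `[j + iD, j + (i+1)D)`; as
`f(n) = o(n^{h-1}) = o(D^{h-1})`, this beats `M f(n)` for every `M` once `D` is large. -/

open PiNat Asymptotics

section Cylinders

variable {E : ℕ → Type*} [∀ n, TopologicalSpace (E n)] [∀ n, DiscreteTopology (E n)]

theorem residual_frequently_of_local {P : ℕ → (∀ n, E n) → Prop}
    (hloc : ∀ n x, ∀ y ∈ cylinder x (n + 1), P n x → P n y)
    (hdense : ∀ x k N, ∃ y ∈ cylinder x k, ∃ n ≥ N, P n y) :
    {x | ∃ᶠ n in atTop, P n x} ∈ residual (∀ n, E n) := by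
  have hiInter : {x | ∃ᶠ n in atTop, P n x} = ⋂ N, {x | ∃ n ≥ N, P n x} := by
    ext x
    simp [frequently_atTop]
  rw [hiInter, countable_iInter_mem]
  refine fun N => residual_of_dense_open ?_ ?_
  · refine isOpen_iff_mem_nhds.2 fun x ⟨n, hn, hx⟩ => ?_
    filter_upwards [(isOpen_cylinder E x (n + 1)).mem_nhds (self_mem_cylinder x _)] with y hy
    exact ⟨n, hn, hloc n x y hy hx⟩
  · refine (isTopologicalBasis_cylinders E).dense_iff.2 ?_
    rintro _ ⟨x, k, rfl⟩ -
    obtain ⟨y, hy, n, hn, hyn⟩ := hdense x k N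
    exact ⟨y, hy, n, hn, hyn⟩

end Cylinders

instance (A : Set ℕ) (h n : ℕ) :
    Finite {s : Multiset ℕ // Multiset.card s = h ∧ (∀ a ∈ s, a ∈ A) ∧ s.sum = n} :=
  Finite.of_injective
    (fun s => (⟨Sym.mk s.1 s.2.1, Finset.mem_sym_iff.2 fun _ ha =>
      Finset.mem_range_succ_iff.2 (s.2.2.2 ▸ Multiset.le_sum_of_mem ha)⟩ :
        ((Finset.range (n + 1)).sym h : Set (Sym ℕ h))))
    fun _ _ hst => Subtype.ext (congrArg (fun u => (u.1 : Multiset ℕ)) hst)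

theorem repCount_congr {A B : Set ℕ} {h n : ℕ} (hAB : ∀ m ≤ n, m ∈ A ↔ m ∈ B) :
    repCount A h n = repCount B h n :=
  Nat.card_congr <| Equiv.subtypeEquivRight fun _ => and_congr_right fun _ =>
    and_congr_left fun hs => forall₂_congr fun a ha => hAB a (hs ▸ Multiset.le_sum_of_mem ha)

theorem repCount_setOf_eq_of_mem_cylinder {x y : ℕ → Bool} {n : ℕ} (hy : y ∈ cylinder x (n + 1))
    (h : ℕ) : repCount {m | y m = true} h n = repCount {m | x m = true} h n :=
  repCount_congr fun m hm => by simp [hy m (Nat.lt_succ_of_le hm)]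

theorem repCount_eq_zero_of_forall_le {A : Set ℕ} {h k n : ℕ} (hA : ∀ a ∈ A, a ≤ k)
    (hn : h * k < n) : repCount A h n = 0 := by
  refine Nat.card_eq_zero.2 (Or.inl ⟨fun ⟨s, hcard, hsA, hs⟩ => ?_⟩)
  have hsum := Multiset.sum_le_card_nsmul s k fun a ha => hA a (hsA a ha)
  rw [hcard, smul_eq_mul] at hsum
  omega

theorem pow_le_repCount {B : Set ℕ} {c : ℕ} (hB : ∀ m, c ≤ m → m ∈ B) (k D : ℕ) :
    D ^ k ≤ repCount B (k + 1) ((k + 1) * (c + k * D)) := by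
  set M := c + k * D
  -- `finProdFinEquiv (i, d) = i * D + d`: the `i`-th free summand lies in `[c + iD, c + (i+1)D)`
  let T : (Fin k → Fin D) → Multiset ℕ := fun g =>
    Finset.univ.val.map fun i => c + (finProdFinEquiv (i, g i) : ℕ)
  have hT_card : ∀ g, Multiset.card (T g) = k := by simp [T]
  have hT_bounds : ∀ g, ∀ a ∈ T g, c ≤ a ∧ a < M := by
    intro g a ha
    obtain ⟨i, -, rfl⟩ := Multiset.mem_map.1 ha
    have := (finProdFinEquiv (i, g i)).2
    omega
  have hT_sum : ∀ g, (T g).sum ≤ k * M := fun g => by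
    simpa [hT_card] using
      Multiset.sum_le_card_nsmul (T g) M fun a ha => (hT_bounds g a ha).2.le
  have hT_inj : Function.Injective T := by
    intro g₁ g₂ he
    funext i
    have hi : c + (finProdFinEquiv (i, g₁ i) : ℕ) ∈ T g₂ :=
      he ▸ Multiset.mem_map_of_mem _ (Finset.mem_univ i)
    obtain ⟨j, -, hj⟩ := Multiset.mem_map.1 hi
    have hji := finProdFinEquiv.injective (Fin.ext (by omega) :
      finProdFinEquiv (j, g₂ j) = finProdFinEquiv (i, g₁ i))
    obtain ⟨rfl, hg⟩ := Prod.ext_iff.1 hji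
    exact hg.symm
  have hM : (k + 1) * M = k * M + M := by ring
  let F : (Fin k → Fin D) → Multiset ℕ := fun g => ((k + 1) * M - (T g).sum) ::ₘ T g
  have hF_filter : ∀ g, (F g).filter (· < M) = T g := fun g => by
    rw [Multiset.filter_cons_of_neg _ (by have := hT_sum g; omega),
      Multiset.filter_eq_self.2 fun a ha => (hT_bounds g a ha).2]
  have hF_rep : ∀ g, Multiset.card (F g) = k + 1 ∧ (∀ a ∈ F g, a ∈ B) ∧
      (F g).sum = (k + 1) * M := by
    intro g
    have := hT_sum g
    refine ⟨by simp [F, hT_card], fun a ha => hB a ?_, by simp only [F, Multiset.sum_cons]; omega⟩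
    rcases Multiset.mem_cons.1 ha with rfl | ha
    · omega
    · exact (hT_bounds g a ha).1
  calc D ^ k = Nat.card (Fin k → Fin D) := by simp
    _ ≤ repCount B (k + 1) ((k + 1) * M) :=
      Nat.card_le_card_of_injective (fun g => ⟨F g, hF_rep g⟩) fun g₁ g₂ he => hT_inj <| by
        rw [← hF_filter g₁, ← hF_filter g₂]
        exact congrArg (fun s => s.1.filter (· < M)) he

theorem natCast_le_div_of_mul_le {M a b : ℕ} (hab : M * b ≤ a) (ha : a ≠ 0) :
    (M : ℝ≥0∞) ≤ a / b := by
  rcases eq_or_ne b 0 with rfl | hb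
  · simp [ENNReal.div_zero, ha]
  · rw [ENNReal.le_div_iff_mul_le (Or.inl (by simpa)) (Or.inl (ENNReal.natCast_ne_top b))]
    exact_mod_cast hab

theorem residual_frequently_repCount_eq_zero (h : ℕ) :
    {A : ℕ → Bool | ∃ᶠ n in atTop, repCount {m | A m = true} h n = 0} ∈ residual (ℕ → Bool) := by
  refine residual_frequently_of_local
    (fun n x y hy hx => (repCount_setOf_eq_of_mem_cylinder hy h).trans hx) fun A j N => ?_
  refine ⟨fun m => if m < j then A m else false, fun i hi => if_pos hi, max N (h * j + 1),
    le_max_left _ _, repCount_eq_zero_of_forall_le (k := j) (fun a ha => ?_) (by omega)⟩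
  by_contra hja
  simp [show ¬a < j by omega] at ha

theorem isLittleO_comp_add_mul {f : ℕ → ℝ} {k : ℕ} (hf : f =o[atTop] fun n => (n : ℝ) ^ k)
    (a : ℕ) {b : ℕ} (hb : 0 < b) : (fun D => f (a + b * D)) =o[atTop] fun D => (D : ℝ) ^ k := by
  have hu : Tendsto (fun D => a + b * D) atTop atTop :=
    tendsto_atTop_mono (fun D => (Nat.le_mul_of_pos_left D hb).trans (Nat.le_add_left _ a))
      tendsto_id
  have huO : (fun D => ((a + b * D : ℕ) : ℝ)) =O[atTop] fun D => (D : ℝ) := by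
    refine IsBigO.of_bound (a + b) ((eventually_ge_atTop 1).mono fun D hD => ?_)
    have : a + b * D ≤ (a + b) * D := by nlinarith
    rw [Real.norm_natCast, Real.norm_natCast]
    exact_mod_cast this
  exact (hf.comp_tendsto hu).trans_isBigO (huO.pow k)

theorem eventually_mul_le_pow_of_isLittleO {f : ℕ → ℕ} {k : ℕ}
    (hf : (fun n => (f n : ℝ)) =o[atTop] fun n => (n : ℝ) ^ k) (M : ℕ) :
    ∀ᶠ n in atTop, M * f n ≤ n ^ k := by
  filter_upwards [hf.def (c := 1 / (M + 1)) (by positivity)] with n hn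
  simp only [norm_pow, RCLike.norm_natCast] at hn
  rw [div_mul_eq_mul_div, le_div_iff₀ (by positivity)] at hn
  have : ((M * f n : ℕ) : ℝ) ≤ ((n ^ k : ℕ) : ℝ) := by
    push_cast
    nlinarith [(f n).cast_nonneg (α := ℝ)]
  exact_mod_cast this

theorem residual_frequently_le_repCount_div {k : ℕ} (hk : 1 ≤ k) {f : ℕ → ℕ}
    (hf : (fun n => (f n : ℝ)) =o[atTop] fun n => (n : ℝ) ^ k) (M : ℕ) :
    {A : ℕ → Bool | ∃ᶠ n in atTop, (M : ℝ≥0∞) ≤ repCount {m | A m = true} (k + 1) n / f n} ∈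
      residual (ℕ → Bool) := by
  refine residual_frequently_of_local
    (fun n x y hy hx => by rwa [repCount_setOf_eq_of_mem_cylinder hy]) fun A j N => ?_
  have hn : ∀ D, (k + 1) * (j + k * D) = (k + 1) * j + (k + 1) * k * D := fun D => by ring
  have hfu := isLittleO_comp_add_mul hf ((k + 1) * j) (Nat.mul_pos k.succ_pos hk)
  obtain ⟨D, hfD, hND, hD⟩ := ((eventually_mul_le_pow_of_isLittleO hfu M).and
    ((eventually_ge_atTop N).and (eventually_ge_atTop 1))).exists
  have hrep := pow_le_repCount (B := {m | (if m < j then A m else true) = true}) (c := j)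
    (fun m hm => by simp [hm]) k D
  rw [hn] at hrep
  refine ⟨_, fun i hi => if_pos hi, _, le_add_left (hND.trans (Nat.le_mul_of_pos_left D ?_)),
    natCast_le_div_of_mul_le (hfD.trans hrep) (Nat.one_le_iff_ne_zero.1
      ((Nat.one_le_pow _ _ hD).trans hrep))⟩
  exact Nat.mul_pos k.succ_pos hk

theorem stmt10_general (h : ℕ) (hh : 2 ≤ h) (f : ℕ → ℕ)
    (hsmall : Filter.Tendsto (fun n : ℕ => (f n : ℝ) / (n : ℝ) ^ (h - 1))
      Filter.atTop (nhds 0)) :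
    {A : ℕ → Bool |
      Filter.liminf (fun n => (repCount {m | A m = true} h n : ℝ≥0∞)) Filter.atTop = 0 ∧
      Filter.limsup
        (fun n => (repCount {m | A m = true} h n : ℝ≥0∞) / (f n : ℝ≥0∞)) Filter.atTop = ⊤}
      ∈ residual (ℕ → Bool) := by
  obtain ⟨k, rfl⟩ : ∃ k, h = k + 1 := ⟨h - 1, by omega⟩
  have hf : (fun n => (f n : ℝ)) =o[atTop] fun n => (n : ℝ) ^ k := by
    rw [isLittleO_iff_tendsto' ((eventually_ge_atTop 1).mono fun n hn h0 => ?_)]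
    · simpa using hsmall
    · exact absurd h0 (pow_ne_zero _ (by positivity))
  filter_upwards [residual_frequently_repCount_eq_zero (k + 1),
    countable_iInter_mem.2 (residual_frequently_le_repCount_div (by omega) hf)] with A hzero hlarge
  refine ⟨nonpos_iff_eq_zero.1 (liminf_le_of_frequently_le' (hzero.mono fun n hn => by simp [hn])),
    ?_⟩
  by_contra hne
  obtain ⟨M, hM⟩ := ENNReal.exists_nat_gt hne
  exact hM.not_ge (le_limsup_of_frequently_le' (mem_iInter.1 hlarge M))

theorem stmt10 (h : ℕ) (hh : 2 ≤ h) (f : ℕ → ℕ)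
    (hdiv : Filter.Tendsto f Filter.atTop Filter.atTop)
    (hsmall : Filter.Tendsto (fun n : ℕ => (f n : ℝ) / (n : ℝ) ^ (h - 1))
      Filter.atTop (nhds 0)) :
    {A : ℕ → Bool |
      Filter.liminf (fun n => (repCount {m | A m = true} h n : ℝ≥0∞)) Filter.atTop = 0 ∧
      Filter.limsup
        (fun n => (repCount {m | A m = true} h n : ℝ≥0∞) / (f n : ℝ≥0∞)) Filter.atTop = ⊤}
      ∈ residual (ℕ → Bool) :=
  stmt10_general h hh f hsmall
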